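/- arXiv:2112.04455 — 5 statements merged into one kernel-verified Lean document; each statement's English description precedes it below -/
import Mathlib

section
/- Let N ≥ 1, let H and Γ be N×N Hermitian complex matrices, let E, y, κ be real numbers, and set P = [[ (κ/N)·I − i(H − E·I), −i(Γ − (y/N)·I) ], [ −i(Γ − (y/N)·I), (κ/N)·I + i(H − E·I) ]] (a 2N×2N block matrix) and T = (1/√2)·[[1, i],[i, 1]] ⊗ I_N. Then det(T·P·T) = det( (H + iΓ − E·I − (iy/N)·I)·(H − iΓ − E·I + (iy/N)·I) + (κ²/N²)·I ). -/
open Matrix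

lemma J_factor (n : ℕ) :
    (fromBlocks (0 : Matrix (Fin n) (Fin n) ℂ) (1 : Matrix (Fin n) (Fin n) ℂ) 1 0) =
      fromBlocks (1 : Matrix (Fin n) (Fin n) ℂ) (1 : Matrix (Fin n) (Fin n) ℂ)
          (0 : Matrix (Fin n) (Fin n) ℂ) (1 : Matrix (Fin n) (Fin n) ℂ) *
        fromBlocks (1 : Matrix (Fin n) (Fin n) ℂ) (0 : Matrix (Fin n) (Fin n) ℂ)
          (-1 : Matrix (Fin n) (Fin n) ℂ) (1 : Matrix (Fin n) (Fin n) ℂ) *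
        fromBlocks (1 : Matrix (Fin n) (Fin n) ℂ) (1 : Matrix (Fin n) (Fin n) ℂ)
          (0 : Matrix (Fin n) (Fin n) ℂ) (1 : Matrix (Fin n) (Fin n) ℂ) *
        fromBlocks (-1 : Matrix (Fin n) (Fin n) ℂ) (0 : Matrix (Fin n) (Fin n) ℂ)
          (0 : Matrix (Fin n) (Fin n) ℂ) (1 : Matrix (Fin n) (Fin n) ℂ) := by
  simp [fromBlocks_multiply]

lemma det_fromBlocks_scalar (n : ℕ) (A D : Matrix (Fin n) (Fin n) ℂ) (c : ℂ) :
    (fromBlocks A (c • (1 : Matrix (Fin n) (Fin n) ℂ)) (c • 1) D).det =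
      (A * D - (c^2) • 1).det := by
  rcases eq_or_ne c 0 with h | h
  · subst h
    simp [det_fromBlocks_zero₂₁]
  · have hJdet : (fromBlocks (0 : Matrix (Fin n) (Fin n) ℂ)
        (1 : Matrix (Fin n) (Fin n) ℂ) 1 0).det = (-1)^n := by
      rw [J_factor, det_mul, det_mul, det_mul]
      simp [det_fromBlocks_zero₂₁, det_fromBlocks_zero₁₂, det_neg]
    have hJM : (fromBlocks (0 : Matrix (Fin n) (Fin n) ℂ)
        (1 : Matrix (Fin n) (Fin n) ℂ) 1 0) *
        fromBlocks A (c • 1) (c • 1) D = fromBlocks (c • 1) D A (c • 1) := by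
      simp [fromBlocks_multiply]
    haveI : Invertible (c • (1 : Matrix (Fin n) (Fin n) ℂ)) :=
      ⟨c⁻¹ • 1, by simp [Matrix.smul_mul, smul_smul, inv_mul_cancel₀ h, mul_inv_cancel₀ h],
        by simp [Matrix.smul_mul, smul_smul, inv_mul_cancel₀ h, mul_inv_cancel₀ h]⟩
    have hinv : (⅟(c • (1 : Matrix (Fin n) (Fin n) ℂ))) = c⁻¹ • 1 :=
      invOf_eq_right_inv (by simp [Matrix.smul_mul, smul_smul, inv_mul_cancel₀ h, mul_inv_cancel₀ h])
    have hcn : (c : ℂ)^n * (c⁻¹)^n = 1 := by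
      rw [← mul_pow, mul_inv_cancel₀ h, one_pow]
    have key : ((-1 : ℂ)^n) * (fromBlocks A (c • (1 : Matrix (Fin n) (Fin n) ℂ))
        (c • 1) D).det = (-1 : ℂ)^n * (A * D - (c^2) • 1).det := by
      calc ((-1 : ℂ)^n) * (fromBlocks A (c • (1 : Matrix (Fin n) (Fin n) ℂ))
          (c • 1) D).det
          = (fromBlocks (c • 1) D A (c • 1)).det := by rw [← hJM, det_mul, hJdet]
        _ = (c • (1 : Matrix (Fin n) (Fin n) ℂ)).det *
              (c • 1 - A * (c⁻¹ • 1) * D).det := by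
            rw [det_fromBlocks₁₁, hinv]
        _ = (-1 : ℂ)^n * (A * D - (c^2) • 1).det := by
            have h1 : (c • (1 : Matrix (Fin n) (Fin n) ℂ)).det = c^n := by simp
            have h2 : c • (1 : Matrix (Fin n) (Fin n) ℂ) - A * (c⁻¹ • 1) * D =
                c⁻¹ • ((c^2) • 1 - A * D) := by
              have hc2 : c⁻¹ * c^2 = c := by field_simp
              rw [smul_sub, smul_smul, hc2]
              congr 1
              rw [mul_smul_comm]
              simp [Matrix.smul_mul]
            rw [h1, h2, det_smul, ← neg_sub (A * D), det_neg]
            simp only [Fintype.card_fin]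
            linear_combination ((-1 : ℂ)^n * (A * D - (c^2) • 1).det) * hcn
    exact mul_left_cancel₀ (pow_ne_zero _ (by norm_num)) key

/-- `det(T·P·T) = det((H+iΓ−E−iy/N)(H−iΓ−E+iy/N) + κ²/N²)`. -/
theorem stmt_0 (N : ℕ) (hN : 1 ≤ N)
    (H Γ : Matrix (Fin N) (Fin N) ℂ)
    (hH : H.IsHermitian) (hΓ : Γ.IsHermitian)
    (E y κ : ℝ)
    (P : Matrix (Fin N ⊕ Fin N) (Fin N ⊕ Fin N) ℂ)
    (hP : P = Matrix.fromBlocks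
      (((κ : ℂ)/N) • 1 - Complex.I • (H - (E : ℂ) • 1))
      ((-Complex.I) • (Γ - ((y : ℂ)/N) • 1))
      ((-Complex.I) • (Γ - ((y : ℂ)/N) • 1))
      (((κ : ℂ)/N) • 1 + Complex.I • (H - (E : ℂ) • 1)))
    (T : Matrix (Fin N ⊕ Fin N) (Fin N ⊕ Fin N) ℂ)
    (hT : T = Matrix.fromBlocks
      ((1/(Real.sqrt 2 : ℂ)) • 1) ((Complex.I/(Real.sqrt 2 : ℂ)) • 1)
      ((Complex.I/(Real.sqrt 2 : ℂ)) • 1) ((1/(Real.sqrt 2 : ℂ)) • 1)) :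
    (T * P * T).det =
      ((H + Complex.I • Γ - (E : ℂ) • 1 - (Complex.I * y / N) • 1) *
        (H - Complex.I • Γ - (E : ℂ) • 1 + (Complex.I * y / N) • 1) +
        ((κ : ℂ)^2 / (N : ℂ)^2) • 1).det := by
  have hs2 : (1/(Real.sqrt 2 : ℂ)) * (1/(Real.sqrt 2 : ℂ)) = 1/2 := by
    have : ((Real.sqrt 2 : ℝ) : ℂ) * ((Real.sqrt 2 : ℝ) : ℂ) = 2 := by
      norm_cast
      exact Real.mul_self_sqrt (by norm_num)
    rw [div_mul_div_comm, one_mul, this]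
  set U : Matrix (Fin N ⊕ Fin N) (Fin N ⊕ Fin N) ℂ :=
    fromBlocks 1 (Complex.I • 1) (Complex.I • 1) 1 with hU
  have hTU : T = (1/(Real.sqrt 2 : ℂ)) • U := by
    rw [hT, hU, Matrix.fromBlocks_smul]
    congr 1 <;> rw [smul_smul] <;> congr 1 <;> ring
  set c : ℂ := Complex.I * ((κ:ℂ)/N) with hc
  set Mm : Matrix (Fin N) (Fin N) ℂ := H - (E:ℂ) • 1 with hMm
  set G : Matrix (Fin N) (Fin N) ℂ := Γ - ((y:ℂ)/N) • 1 with hG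
  have key : T * P * T =
      fromBlocks (G - Complex.I • Mm) (c • 1) (c • 1) (G + Complex.I • Mm) := by
    rw [hTU, Matrix.smul_mul, Matrix.mul_smul, Matrix.smul_mul, smul_smul, hs2]
    rw [hP, hU, fromBlocks_multiply, fromBlocks_multiply, Matrix.fromBlocks_smul]
    rw [Matrix.fromBlocks_inj]
    refine ⟨?_, ?_, ?_, ?_⟩ <;>
      · simp only [smul_mul_assoc, mul_smul_comm, Matrix.one_mul, Matrix.mul_one,
          smul_smul, one_mul, mul_one]
        match_scalars <;> first
          | ring1
          | (ring_nf; simp [show (Complex.I)^3 = -Complex.I from by rw [pow_succ, Complex.I_sq]; ring, Complex.I_sq]; try ring1)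
          | (simp [Complex.I_mul_I]; try ring1)
  rw [key, det_fromBlocks_scalar]
  congr 1
  rw [hG, hMm, hc]
  simp only [sub_mul, add_mul, mul_add, mul_sub, smul_mul_assoc, mul_smul_comm,
    smul_smul, smul_sub, smul_add, Matrix.mul_one, Matrix.one_mul]
  match_scalars <;> first
    | ring1
    | (ring_nf; simp [show (Complex.I)^3 = -Complex.I from by
        rw [pow_succ, Complex.I_sq]; ring, Complex.I_sq]; try ring1)
    | (simp [Complex.I_mul_I]; try ring1)
end

section
/- Let E be real with 0 < |E| < 2 and define g(x) = x²/2 + E²/8 − (1/2)·log(x² + E²/4) − 1/2 for x ∈ ℝ. Then g(x) ≥ 0 for all real x, and g(x) = 0 if and only if x = √(1 − E²/4) or x = −√(1 − E²/4). -/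
/-- for `0 < |E| < 2`, the function
`g(x) = x²/2 + E²/8 − (1/2)log(x² + E²/4) − 1/2` is nonnegative on ℝ and vanishes
exactly at `x = ±√(1 − E²/4)`. -/
theorem stmt_5 (E : ℝ) (hE0 : 0 < |E|) (hE2 : |E| < 2) (x : ℝ) :
    0 ≤ x^2/2 + E^2/8 - (1/2) * Real.log (x^2 + E^2/4) - 1/2 ∧
    (x^2/2 + E^2/8 - (1/2) * Real.log (x^2 + E^2/4) - 1/2 = 0 ↔
      x = Real.sqrt (1 - E^2/4) ∨ x = -Real.sqrt (1 - E^2/4)) := by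
  have hEne : E ≠ 0 := by
    intro h; simp [h] at hE0
  have ht : (0:ℝ) < x^2 + E^2/4 := by positivity
  have hlog : Real.log (x^2 + E^2/4) ≤ (x^2 + E^2/4) - 1 :=
    Real.log_le_sub_one_of_pos ht
  have hE4 : E^2 < 4 := by
    have : |E|^2 < 2^2 := by nlinarith [abs_nonneg E]
    rw [sq_abs] at this; linarith
  have hc : (0:ℝ) ≤ 1 - E^2/4 := by linarith
  constructor
  · linarith
  · constructor
    · intro h
      have ht1 : x^2 + E^2/4 = 1 := by
        by_contra hne
        have := Real.log_lt_sub_one_of_pos ht hne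
        linarith
      have hx2 : x^2 = 1 - E^2/4 := by linarith
      have : |x| = Real.sqrt (1 - E^2/4) := by
        rw [← hx2, Real.sqrt_sq_eq_abs]
      rcases abs_eq (Real.sqrt_nonneg (1 - E^2/4)) |>.mp this with h1 | h1
      · exact Or.inl h1
      · exact Or.inr h1
    · intro h
      have hx2 : x^2 = 1 - E^2/4 := by
        rcases h with h | h <;> rw [h] <;>
          simp [Real.sq_sqrt hc, neg_pow]
      have ht1 : x^2 + E^2/4 = 1 := by linarith
      rw [ht1]
      simp [Real.log_one]
      linarith
end

section
/- For t, s ∈ ℂ define the 2×2 complex matrix S(t,s) = [[cosh(t/2) + i·s·e^{t/2}/2, −sinh(t/2) − i·s·e^{t/2}/2],[−sinh(t/2) + i·s·e^{t/2}/2, cosh(t/2) − i·s·e^{t/2}/2]], and for α ∈ ℝ let V_α = [[cos(α/2), −i sin(α/2)],[−i sin(α/2), cos(α/2)]]. Then S(t,s)·V_α = S(t + iα, s). -/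
open Matrix

/-- The parametrization `S(t,s)` of matrices in the hyperbolic group `U(1,1)`. -/
noncomputable def Smat (t s : ℂ) : Matrix (Fin 2) (Fin 2) ℂ :=
  !![Complex.cosh (t/2) + Complex.I * s * Complex.exp (t/2) / 2,
     -Complex.sinh (t/2) - Complex.I * s * Complex.exp (t/2) / 2;
     -Complex.sinh (t/2) + Complex.I * s * Complex.exp (t/2) / 2,
     Complex.cosh (t/2) - Complex.I * s * Complex.exp (t/2) / 2]

/-- The unitary rotation `V_α`. -/
noncomputable def Vmat (α : ℝ) : Matrix (Fin 2) (Fin 2) ℂ :=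
  !![(Real.cos (α/2) : ℂ), -Complex.I * Real.sin (α/2);
     -Complex.I * Real.sin (α/2), (Real.cos (α/2) : ℂ)]

/-- `S(t,s)·V_α = S(t + iα, s)`. -/
theorem stmt_9 (t s : ℂ) (α : ℝ) :
    Smat t s * Vmat α = Smat (t + Complex.I * α) s := by
  have h2 : (t + Complex.I * α)/2 = t/2 + ((α:ℂ)/2) * Complex.I := by ring
  rw [Smat, Smat, Vmat, Matrix.mul_fin_two, h2]
  simp only [Complex.cosh_add, Complex.sinh_add, Complex.exp_add,
    Complex.cosh_mul_I, Complex.sinh_mul_I, Complex.exp_mul_I,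
    Complex.ofReal_cos, Complex.ofReal_sin]
  push_cast
  ext i j
  fin_cases i <;> fin_cases j <;>
    simp only [Matrix.cons_val', Matrix.cons_val_zero, Matrix.cons_val_one,
      Matrix.head_cons, Matrix.empty_val', Matrix.cons_val_fin_one, Fin.isValue,
      Fin.zero_eta, Fin.mk_one] <;> ring_nf
end

section
/- Let E be real with |E| < 2, set c₀ = √(4−E²), let γ > 0 and τ = (γ + γ^{-1})/c₀. Let U be a 2×2 unitary complex matrix with det U = 1, let σ = [[0,1],[−1,0]] and L = diag(1,−1). Then det( −(iE/c₀)·I + (2iγ/c₀)·U·σ·U* + L ) = −(4γ/c₀)·( τ − 2·Im(U_{11}·conj(U_{12})) ). -/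
open Matrix

set_option maxHeartbeats 1000000 in
/-- determinant formula for `−(iE/c₀)I + (2iγ/c₀)UσU* + L`
with `U ∈ SU(2)`. -/
theorem stmt_11 (E : ℝ) (hE : |E| < 2)
    (c₀ : ℝ) (hc₀ : c₀ = Real.sqrt (4 - E^2))
    (γ : ℝ) (hγ : 0 < γ) (τ : ℝ) (hτ : τ = (γ + γ⁻¹) / c₀)
    (U : Matrix (Fin 2) (Fin 2) ℂ)
    (hU : U * Uᴴ = 1) (hdetU : U.det = 1)
    (σ L : Matrix (Fin 2) (Fin 2) ℂ)
    (hσ : σ = !![0, 1; -1, 0]) (hL : L = !![1, 0; 0, -1]) :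
    (-((Complex.I * E / c₀) • (1 : Matrix (Fin 2) (Fin 2) ℂ))
        + ((2 * Complex.I * γ / c₀)) • (U * σ * Uᴴ) + L).det
      = ((-(4 * γ / c₀) * (τ - 2 * (U 0 0 * (starRingEnd ℂ) (U 0 1)).im) : ℝ) : ℂ) := by
  have hE2 : (0:ℝ) < 4 - E^2 := by nlinarith [abs_nonneg E, sq_abs E, abs_lt.mp hE]
  have hc0pos : 0 < c₀ := by rw [hc₀]; positivity
  have hc0ne : (c₀:ℝ) ≠ 0 := hc0pos.ne'
  have hc2 : c₀^2 = 4 - E^2 := by rw [hc₀]; exact Real.sq_sqrt hE2.le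
  have hγne : γ ≠ 0 := hγ.ne'
  have h00 : (U * Uᴴ) 0 0 = (1 : Matrix (Fin 2) (Fin 2) ℂ) 0 0 := by rw [hU]
  have h10 : (U * Uᴴ) 1 0 = (1 : Matrix (Fin 2) (Fin 2) ℂ) 1 0 := by rw [hU]
  simp only [Matrix.mul_apply, Fin.sum_univ_two, Matrix.one_apply,
    Matrix.conjTranspose_apply, if_true, eq_self_iff_true, one_ne_zero,
    Fin.one_eq_zero_iff, Nat.succ_ne_self, if_false, OfNat.ofNat_ne_one,
    Fin.zero_eq_one_iff, ite_false, ite_true, Ne, not_false_iff] at h00 h10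
  norm_num at h00 h10
  have hdet2 : U 0 0 * U 1 1 - U 0 1 * U 1 0 = 1 := by
    rw [Matrix.det_fin_two] at hdetU; exact hdetU
  have hd : U 1 1 = (starRingEnd ℂ) (U 0 0) := by
    linear_combination (starRingEnd ℂ) (U 0 0) * hdet2 + U 0 1 * h10 - U 1 1 * h00
  have hc : U 1 0 = -(starRingEnd ℂ) (U 0 1) := by
    linear_combination -(starRingEnd ℂ) (U 0 1) * hdet2 + U 0 0 * h10 - U 1 0 * h00
  set a := U 0 0 with ha
  set b := U 0 1 with hb
  have hM : (-((Complex.I * E / c₀) • (1 : Matrix (Fin 2) (Fin 2) ℂ))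
        + ((2 * Complex.I * γ / c₀)) • (U * σ * Uᴴ) + L)
      = !![1 - Complex.I * E / c₀
            + (2 * Complex.I * γ / c₀) * (a * (starRingEnd ℂ) b - b * (starRingEnd ℂ) a),
          (2 * Complex.I * γ / c₀) * (a^2 + b^2);
          -((2 * Complex.I * γ / c₀) * (((starRingEnd ℂ) a)^2 + ((starRingEnd ℂ) b)^2)),
          -1 - Complex.I * E / c₀
            + (2 * Complex.I * γ / c₀) * (b * (starRingEnd ℂ) a - a * (starRingEnd ℂ) b)] := by
    subst hσ hL
    ext i j
    fin_cases i <;> fin_cases j <;>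
      simp [Matrix.mul_apply, Fin.sum_univ_two, Matrix.conjTranspose_apply,
        Matrix.one_apply, hd, hc, ← ha, ← hb, -mul_eq_mul_left_iff, -mul_eq_mul_right_iff] <;> ring
  rw [hM, Matrix.det_fin_two_of]
  subst hτ
  obtain ⟨ar, ai⟩ := a
  obtain ⟨br, bi⟩ := b
  rw [Complex.ext_iff] at h00 ⊢
  simp only [Complex.add_re, Complex.add_im, Complex.mul_re, Complex.mul_im,
    Complex.sub_re, Complex.sub_im, Complex.neg_re, Complex.neg_im, Complex.ofReal_re,
    Complex.ofReal_im, Complex.div_re, Complex.div_im, Complex.I_re, Complex.I_im,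
    Complex.one_re, Complex.one_im, Complex.conj_re, Complex.conj_im,
    Complex.re_ofNat, Complex.im_ofNat, Complex.normSq_apply, pow_two] at h00 ⊢
  obtain ⟨h1, -⟩ := h00
  constructor
  · linear_combination (norm := (field_simp; ring)) (-(1/c₀^2)) * hc2 +
      (-(4*γ^2/c₀^2)*((ar*ar+ai*ai+br*br+bi*bi)+1)) * h1
  · linear_combination (norm := (field_simp; ring)) (0:ℝ) * h1
end

section
/- Let E be real with |E| < 2, set c₀ = √(4−E²), let γ > 0 and τ = (γ + γ^{-1})/c₀. For θ, t ∈ ℝ let S = [[e^{iθ/2}cosh(t/2), e^{−iθ/2}sinh(t/2)],[e^{iθ/2}sinh(t/2), e^{−iθ/2}cosh(t/2)]], for α ∈ (0, π/2) let V = [[cos(α/2), −i sin(α/2)],[−i sin(α/2), cos(α/2)]], and set S̃ = S·V*. Then, with σ = [[0,1],[−1,0]] and L = diag(1,−1): det( (iE/c₀)·I + (2iγ/c₀)·S̃·σ·S̃^{-1} + L ) = −(4γ/c₀)·( τ − i·sinh(t)·cos(α)·cos(θ) + cosh(t)·sin(α) ). -/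
open Matrix

/-- determinant formula for `(iE/c₀)I + (2iγ/c₀)S̃σS̃⁻¹ + L`
where `S̃ = S·V*`, `S` is the standard parametrization of `U(1,1)` and `V` the
unitary rotation by `α`. -/
theorem stmt_13 (E : ℝ) (hE : |E| < 2)
    (c₀ : ℝ) (hc₀ : c₀ = Real.sqrt (4 - E^2))
    (γ : ℝ) (hγ : 0 < γ) (τ : ℝ) (hτ : τ = (γ + γ⁻¹) / c₀)
    (θ t : ℝ) (α : ℝ) (hα : α ∈ Set.Ioo 0 (Real.pi/2))
    (S V σ L : Matrix (Fin 2) (Fin 2) ℂ)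
    (hS : S = !![Complex.exp (Complex.I * θ / 2) * Real.cosh (t/2),
                 Complex.exp (-(Complex.I * θ) / 2) * Real.sinh (t/2);
                 Complex.exp (Complex.I * θ / 2) * Real.sinh (t/2),
                 Complex.exp (-(Complex.I * θ) / 2) * Real.cosh (t/2)])
    (hV : V = !![(Real.cos (α/2) : ℂ), -Complex.I * Real.sin (α/2);
                 -Complex.I * Real.sin (α/2), (Real.cos (α/2) : ℂ)])
    (hσ : σ = !![0, 1; -1, 0]) (hL : L = !![1, 0; 0, -1]) :
    ((Complex.I * E / c₀) • (1 : Matrix (Fin 2) (Fin 2) ℂ)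
        + ((2 * Complex.I * γ / c₀)) • ((S * Vᴴ) * σ * (S * Vᴴ)⁻¹) + L).det
      = -((4 * γ / c₀ : ℝ) : ℂ) *
          ((τ : ℂ) - Complex.I * (Real.sinh t * Real.cos α * Real.cos θ : ℝ)
            + ((Real.cosh t * Real.sin α : ℝ) : ℂ)) := by
  -- basic nonvanishing facts
  have h4E : (0:ℝ) < 4 - E^2 := by nlinarith [abs_nonneg E, sq_abs E]
  have hc0pos : 0 < c₀ := by rw [hc₀]; positivity
  have hc0ne : ((c₀:ℂ)) ≠ 0 := by exact_mod_cast hc0pos.ne'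
  have hγne : ((γ:ℂ)) ≠ 0 := by exact_mod_cast hγ.ne'
  -- short names
  set e := Complex.exp (Complex.I * θ / 2) with he_def
  set f := Complex.exp (-(Complex.I * θ) / 2) with hf_def
  set ct := ((Real.cosh (t/2) : ℝ) : ℂ) with hct_def
  set st := ((Real.sinh (t/2) : ℝ) : ℂ) with hst_def
  set ca := ((Real.cos (α/2) : ℝ) : ℂ) with hca_def
  set sa := ((Real.sin (α/2) : ℝ) : ℂ) with hsa_def
  -- algebraic relations
  have h_I : Complex.I^2 = -1 := Complex.I_sq
  have h_ef : e * f = 1 := by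
    rw [he_def, hf_def, ← Complex.exp_add,
      show Complex.I * θ / 2 + -(Complex.I * θ) / 2 = 0 by ring, Complex.exp_zero]
  have h_st : st^2 = ct^2 - 1 := by
    rw [hst_def, hct_def]
    exact_mod_cast congrArg (fun x : ℝ => (x:ℂ))
      (by nlinarith [Real.cosh_sq_sub_sinh_sq (t/2)] : Real.sinh (t/2)^2 = Real.cosh (t/2)^2 - 1)
  have h_sa : sa^2 = 1 - ca^2 := by
    rw [hsa_def, hca_def]
    exact_mod_cast congrArg (fun x : ℝ => (x:ℂ))
      (by nlinarith [Real.sin_sq_add_cos_sq (α/2)] : Real.sin (α/2)^2 = 1 - Real.cos (α/2)^2)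
  have h_cci : (c₀:ℂ) * (c₀:ℂ)⁻¹ = 1 := mul_inv_cancel₀ hc0ne
  have h_ggi : (γ:ℂ) * (γ:ℂ)⁻¹ = 1 := mul_inv_cancel₀ hγne
  have h_c2 : ((c₀:ℂ))^2 = 4 - (E:ℂ)^2 := by
    have : c₀^2 = 4 - E^2 := by rw [hc₀]; exact Real.sq_sqrt h4E.le
    exact_mod_cast congrArg (fun x : ℝ => (x:ℂ)) this
  have h_tau : ((τ:ℝ):ℂ) = ((γ:ℂ) + (γ:ℂ)⁻¹) * (c₀:ℂ)⁻¹ := by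
    rw [hτ]; push_cast; ring
  have he2 : e^2 = Complex.exp ((θ:ℂ) * Complex.I) := by
    rw [sq, he_def, ← Complex.exp_add]; congr 1; ring
  have hf2 : f^2 = Complex.exp (-(θ:ℂ) * Complex.I) := by
    rw [sq, hf_def, ← Complex.exp_add]; congr 1; ring
  have h_cth : ((Real.cos θ : ℝ):ℂ) = (e^2 + f^2) / 2 := by
    rw [Complex.ofReal_cos, Complex.cos, he2, hf2]
  have h_sht : ((Real.sinh t : ℝ):ℂ) = 2 * st * ct := by
    have h := Real.sinh_add (t/2) (t/2)
    rw [add_halves] at h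
    rw [h, hst_def, hct_def]; push_cast; ring
  have h_cht : ((Real.cosh t : ℝ):ℂ) = ct^2 + st^2 := by
    have h := Real.cosh_add (t/2) (t/2)
    rw [add_halves] at h
    rw [h, hct_def, hst_def]; push_cast; ring
  have h_cal : ((Real.cos α : ℝ):ℂ) = ca^2 - sa^2 := by
    have h := Real.cos_add (α/2) (α/2)
    rw [add_halves] at h
    rw [h, hca_def, hsa_def]; push_cast; ring
  have h_sal : ((Real.sin α : ℝ):ℂ) = 2 * sa * ca := by
    have h := Real.sin_add (α/2) (α/2)
    rw [add_halves] at h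
    rw [h, hsa_def, hca_def]; push_cast; ring
  -- the matrix S * Vᴴ and its inverse
  have hVh : Vᴴ = !![ca, Complex.I * sa; Complex.I * sa, ca] := by
    subst hV
    ext i j
    fin_cases i <;> fin_cases j <;>
      simp [hca_def, hsa_def, Matrix.conjTranspose_apply, Complex.conj_ofReal,
        -Complex.ofReal_cos, -Complex.ofReal_sin] <;> ring
  have hA : S * Vᴴ = !![e*ct*ca + Complex.I*f*st*sa, f*st*ca + Complex.I*e*ct*sa;
                        e*st*ca + Complex.I*f*ct*sa, f*ct*ca + Complex.I*e*st*sa] := by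
    rw [hS, hVh, Matrix.mul_fin_two]
    congr 1 <;> ring_nf
  set Bm : Matrix (Fin 2) (Fin 2) ℂ :=
    !![f*ct*ca + Complex.I*e*st*sa, -(f*st*ca + Complex.I*e*ct*sa);
       -(e*st*ca + Complex.I*f*ct*sa), e*ct*ca + Complex.I*f*st*sa] with hBm
  have hAB : (S * Vᴴ) * Bm = 1 := by
    rw [hA, hBm, Matrix.mul_fin_two]
    ext i j
    fin_cases i <;> fin_cases j <;>
      simp [Matrix.one_apply]
    · linear_combination (e*f*st^2*sa^2 - e*f*ct^2*sa^2) * h_I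
        + (-st^2*sa^2 - st^2*ca^2 + ct^2*sa^2 + ct^2*ca^2) * h_ef
        + (-sa^2 - ca^2) * h_st + h_sa
    · ring
    · ring
    · linear_combination (e*f*st^2*sa^2 - e*f*ct^2*sa^2) * h_I
        + (-st^2*sa^2 - st^2*ca^2 + ct^2*sa^2 + ct^2*ca^2) * h_ef
        + (-sa^2 - ca^2) * h_st + h_sa
  have hinv : (S * Vᴴ)⁻¹ = Bm := inv_eq_right_inv hAB
  rw [hinv, hA, hBm, hσ, hL, Matrix.mul_fin_two, Matrix.mul_fin_two, Matrix.det_fin_two]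
  simp only [Matrix.add_apply, Matrix.smul_apply, Matrix.one_apply, Matrix.cons_val',
    Matrix.cons_val_zero, Matrix.cons_val_one, Matrix.head_cons, Matrix.head_fin_const,
    Matrix.empty_val', Matrix.cons_val_fin_one, Matrix.of_apply, smul_eq_mul,
    if_true, if_neg, Fin.isValue, ne_eq, zero_ne_one, not_false_eq_true, one_ne_zero,
    mul_one, mul_zero]
  simp only [Complex.ofReal_mul, Complex.ofReal_div, Complex.ofReal_ofNat]
  linear_combination ((4:ℂ)*(c₀:ℂ)⁻¹*(γ:ℂ)) * h_tau
    + ((-4:ℂ)*Complex.I*(c₀:ℂ)⁻¹*(γ:ℂ)*(Real.sinh t:ℂ)*(Real.cos α:ℂ)) * h_cth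
    + ((-2:ℂ)*Complex.I*f^2*(c₀:ℂ)⁻¹*(γ:ℂ)*(Real.cos α:ℂ) + (-2:ℂ)*Complex.I*e^2*(c₀:ℂ)⁻¹*(γ:ℂ)*(Real.cos α:ℂ)) * h_sht
    + ((4:ℂ)*(c₀:ℂ)⁻¹*(γ:ℂ)*(Real.sin α:ℂ)) * h_cht
    + ((-4:ℂ)*Complex.I*f^2*ct*st*(c₀:ℂ)⁻¹*(γ:ℂ) + (-4:ℂ)*Complex.I*e^2*ct*st*(c₀:ℂ)⁻¹*(γ:ℂ)) * h_cal
    + ((4:ℂ)*st^2*(c₀:ℂ)⁻¹*(γ:ℂ) + (4:ℂ)*ct^2*(c₀:ℂ)⁻¹*(γ:ℂ)) * h_sal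
    + ((E:ℂ)^2*(c₀:ℂ)⁻¹^2 + (8:ℂ)*e*f*st^2*ca*sa*(c₀:ℂ)⁻¹*(γ:ℂ) + (8:ℂ)*e*f*ct^2*ca*sa*(c₀:ℂ)⁻¹*(γ:ℂ) + (4:ℂ)*e^2*f^2*st^4*sa^4*(c₀:ℂ)⁻¹^2*(γ:ℂ)^2 + (8:ℂ)*e^2*f^2*st^4*ca^2*sa^2*(c₀:ℂ)⁻¹^2*(γ:ℂ)^2 + (4:ℂ)*e^2*f^2*st^4*ca^4*(c₀:ℂ)⁻¹^2*(γ:ℂ)^2 + (-8:ℂ)*e^2*f^2*ct^2*st^2*sa^4*(c₀:ℂ)⁻¹^2*(γ:ℂ)^2 + (-16:ℂ)*e^2*f^2*ct^2*st^2*ca^2*sa^2*(c₀:ℂ)⁻¹^2*(γ:ℂ)^2 + (-8:ℂ)*e^2*f^2*ct^2*st^2*ca^4*(c₀:ℂ)⁻¹^2*(γ:ℂ)^2 + (4:ℂ)*e^2*f^2*ct^4*sa^4*(c₀:ℂ)⁻¹^2*(γ:ℂ)^2 + (8:ℂ)*e^2*f^2*ct^4*ca^2*sa^2*(c₀:ℂ)⁻¹^2*(γ:ℂ)^2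 + (4:ℂ)*e^2*f^2*ct^4*ca^4*(c₀:ℂ)⁻¹^2*(γ:ℂ)^2 + (4:ℂ)*Complex.I*f^2*ct*st*sa^2*(c₀:ℂ)⁻¹*(γ:ℂ) + (4:ℂ)*Complex.I*e^2*ct*st*sa^2*(c₀:ℂ)⁻¹*(γ:ℂ) + (-4:ℂ)*Complex.I^2*e^2*f^2*st^4*sa^4*(c₀:ℂ)⁻¹^2*(γ:ℂ)^2 + (-8:ℂ)*Complex.I^2*e^2*f^2*st^4*ca^2*sa^2*(c₀:ℂ)⁻¹^2*(γ:ℂ)^2 + (8:ℂ)*Complex.I^2*e^2*f^2*ct^2*st^2*sa^4*(c₀:ℂ)⁻¹^2*(γ:ℂ)^2 + (16:ℂ)*Complex.I^2*e^2*f^2*ct^2*st^2*ca^2*sa^2*(c₀:ℂ)⁻¹^2*(γ:ℂ)^2 + (-4:ℂ)*Complex.I^2*e^2*f^2*ct^4*sa^4*(c₀:ℂ)⁻¹^2*(γ:ℂ)^2 + (-8:ℂ)*Complex.I^2*e^2*f^2*ct^4*ca^2*sa^2*(c₀:ℂ)⁻¹^2*(γ:ℂ)^2 + (4:ℂ)*Complex.I^4*e^2*f^2*st^4*sa^4*(c₀:ℂ)⁻¹^2*(γ:ℂ)^2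 + (-8:ℂ)*Complex.I^4*e^2*f^2*ct^2*st^2*sa^4*(c₀:ℂ)⁻¹^2*(γ:ℂ)^2 + (4:ℂ)*Complex.I^4*e^2*f^2*ct^4*sa^4*(c₀:ℂ)⁻¹^2*(γ:ℂ)^2) * h_I
    + ((-8:ℂ)*st^2*ca*sa*(c₀:ℂ)⁻¹*(γ:ℂ) + (-4:ℂ)*st^4*sa^4*(c₀:ℂ)⁻¹^2*(γ:ℂ)^2 + (-8:ℂ)*st^4*ca^2*sa^2*(c₀:ℂ)⁻¹^2*(γ:ℂ)^2 + (-4:ℂ)*st^4*ca^4*(c₀:ℂ)⁻¹^2*(γ:ℂ)^2 + (-8:ℂ)*ct^2*ca*sa*(c₀:ℂ)⁻¹*(γ:ℂ) + (8:ℂ)*ct^2*st^2*sa^4*(c₀:ℂ)⁻¹^2*(γ:ℂ)^2 + (16:ℂ)*ct^2*st^2*ca^2*sa^2*(c₀:ℂ)⁻¹^2*(γ:ℂ)^2 + (8:ℂ)*ct^2*st^2*ca^4*(c₀:ℂ)⁻¹^2*(γ:ℂ)^2 + (-4:ℂ)*ct^4*sa^4*(c₀:ℂ)⁻¹^2*(γ:ℂ)^2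 + (-8:ℂ)*ct^4*ca^2*sa^2*(c₀:ℂ)⁻¹^2*(γ:ℂ)^2 + (-4:ℂ)*ct^4*ca^4*(c₀:ℂ)⁻¹^2*(γ:ℂ)^2 + (-4:ℂ)*e*f*st^4*sa^4*(c₀:ℂ)⁻¹^2*(γ:ℂ)^2 + (-8:ℂ)*e*f*st^4*ca^2*sa^2*(c₀:ℂ)⁻¹^2*(γ:ℂ)^2 + (-4:ℂ)*e*f*st^4*ca^4*(c₀:ℂ)⁻¹^2*(γ:ℂ)^2 + (8:ℂ)*e*f*ct^2*st^2*sa^4*(c₀:ℂ)⁻¹^2*(γ:ℂ)^2 + (16:ℂ)*e*f*ct^2*st^2*ca^2*sa^2*(c₀:ℂ)⁻¹^2*(γ:ℂ)^2 + (8:ℂ)*e*f*ct^2*st^2*ca^4*(c₀:ℂ)⁻¹^2*(γ:ℂ)^2 + (-4:ℂ)*e*f*ct^4*sa^4*(c₀:ℂ)⁻¹^2*(γ:ℂ)^2 + (-8:ℂ)*e*f*ct^4*ca^2*sa^2*(c₀:ℂ)⁻¹^2*(γ:ℂ)^2 + (-4:ℂ)*e*f*ct^4*ca^4*(c₀:ℂ)⁻¹^2*(γ:ℂ)^2)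 * h_ef
    + ((4:ℂ)*sa^4*(c₀:ℂ)⁻¹^2*(γ:ℂ)^2 + (8:ℂ)*ca^2*sa^2*(c₀:ℂ)⁻¹^2*(γ:ℂ)^2 + (4:ℂ)*ca^4*(c₀:ℂ)⁻¹^2*(γ:ℂ)^2 + (-4:ℂ)*st^2*sa^4*(c₀:ℂ)⁻¹^2*(γ:ℂ)^2 + (-8:ℂ)*st^2*ca^2*sa^2*(c₀:ℂ)⁻¹^2*(γ:ℂ)^2 + (-4:ℂ)*st^2*ca^4*(c₀:ℂ)⁻¹^2*(γ:ℂ)^2 + (4:ℂ)*ct^2*sa^4*(c₀:ℂ)⁻¹^2*(γ:ℂ)^2 + (8:ℂ)*ct^2*ca^2*sa^2*(c₀:ℂ)⁻¹^2*(γ:ℂ)^2 + (4:ℂ)*ct^2*ca^4*(c₀:ℂ)⁻¹^2*(γ:ℂ)^2) * h_st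
    + ((-4:ℂ)*(c₀:ℂ)⁻¹^2*(γ:ℂ)^2 + (-4:ℂ)*sa^2*(c₀:ℂ)⁻¹^2*(γ:ℂ)^2 + (-4:ℂ)*ca^2*(c₀:ℂ)⁻¹^2*(γ:ℂ)^2) * h_sa
    + ((1:ℂ) + (c₀:ℂ)*(c₀:ℂ)⁻¹) * h_cci
    + ((4:ℂ)*(c₀:ℂ)⁻¹^2) * h_ggi
    + ((-1:ℂ)*(c₀:ℂ)⁻¹^2) * h_c2
end
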